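/- For all integers k, l, m ≥ 1 with l ≥ 2, the strict inequality L(l) + L(k+l+m) < L(l+m) + L(k+l) holds, where L(x) = (x(x-1)/2)(ln x - ln(x-1)). -/

import Mathlib

/-!
`L` is strictly concave on `(1, ∞)`: its second derivative is
`log x - log (x - 1) - (1 / x + 1 / (x - 1)) / 2`, which is negative because the trapezoid rule
overestimates `∫_{x-1}^x dt / t`, the integrand being convex. For a strictly concave function,
`a < b < d` and `a + d = b + c` give `L a + L d < L b + L c`, and this is applied to
`a = l`, `b = l + m`, `c = k + l`, `d = k + l + m`.
-/

open Real Set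

theorem StrictConcaveOn.add_lt_add_of_add_eq {𝕜 β : Type*} [Field 𝕜] [LinearOrder 𝕜]
    [IsStrictOrderedRing 𝕜] [AddCommGroup β] [PartialOrder β] [IsOrderedAddMonoid β]
    [Module 𝕜 β] {s : Set 𝕜} {f : 𝕜 → β} (hf : StrictConcaveOn 𝕜 s f) {a b c d : 𝕜}
    (ha : a ∈ s) (hd : d ∈ s) (hab : a < b) (hbd : b < d) (h : a + d = b + c) :
    f a + f d < f b + f c := by
  set θ := (d - b) / (d - a)
  have hda : 0 < d - a := by linarith
  have hθ : 0 < θ := div_pos (by linarith) hda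
  have hθ' : 0 < 1 - θ := by
    rw [sub_pos, div_lt_one hda]; linarith
  have hθb : θ • a + (1 - θ) • d = b := by
    simp only [smul_eq_mul, θ]; field_simp; ring
  have hθc : (1 - θ) • a + θ • d = c := by
    obtain rfl : c = a + d - b := by linear_combination -h
    simp only [smul_eq_mul, θ]; field_simp; ring
  have hb := hf.2 ha hd (hab.trans hbd).ne hθ hθ' (add_sub_cancel θ 1)
  have hc := hf.2 ha hd (hab.trans hbd).ne hθ' hθ (sub_add_cancel 1 θ)
  rw [hθb] at hb
  rw [hθc] at hc
  calc f a + f d = θ • f a + (1 - θ) • f d + ((1 - θ) • f a + θ • f d) := by module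
    _ < f b + f c := add_lt_add hb hc

theorem log_one_add_sub_log_one_sub_lt {t : ℝ} (h0 : 0 < t) (h1 : t < 1) :
    log (1 + t) - log (1 - t) < 2 * t / (1 - t ^ 2) := by
  -- compare `2 ∑ t ^ (2k+1) / (2k+1)` termwise with the geometric series `2 ∑ t ^ (2k+1)`
  have hgeom : HasSum (fun k : ℕ => 2 * t * (t ^ 2) ^ k) (2 * t * (1 - t ^ 2)⁻¹) :=
    (hasSum_geometric_of_lt_one (by positivity) (by nlinarith)).mul_left (2 * t)
  rw [div_eq_mul_inv]
  refine hasSum_lt (i := 1) (fun k => ?_) ?_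
    (hasSum_log_sub_log_of_abs_lt_one (by rwa [abs_of_pos h0])) hgeom
  · rw [show 2 * t * (t ^ 2) ^ k = 2 * 1 * t ^ (2 * k + 1) by ring]
    gcongr
    rw [div_le_one (by positivity)]
    linarith [k.cast_nonneg (α := ℝ)]
  · norm_num
    nlinarith [pow_pos h0 3]

theorem log_sub_log_lt_trapezoid {a b : ℝ} (ha : 0 < a) (hab : a < b) :
    log b - log a < (b - a) * (a⁻¹ + b⁻¹) / 2 := by
  -- `t = (b - a) / (b + a)` satisfies `(1 + t) / (1 - t) = b / a`
  have hb : 0 < b := ha.trans hab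
  have key := log_one_add_sub_log_one_sub_lt (t := (b - a) / (b + a))
    (div_pos (by linarith) (by linarith)) (by rw [div_lt_one (by linarith)]; linarith)
  have h_add : 1 + (b - a) / (b + a) = b / ((b + a) / 2) := by field_simp; ring
  have h_sub : 1 - (b - a) / (b + a) = a / ((b + a) / 2) := by field_simp; ring
  have h_rhs : 2 * ((b - a) / (b + a)) / (1 - ((b - a) / (b + a)) ^ 2) =
      (b - a) * (a⁻¹ + b⁻¹) / 2 := by
    rw [show 1 - ((b - a) / (b + a)) ^ 2 = 4 * a * b / (b + a) ^ 2 by field_simp; ring]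
    field_simp
    ring
  rwa [h_add, h_sub, h_rhs, log_div hb.ne' (by positivity), log_div ha.ne' (by positivity),
    sub_sub_sub_cancel_right] at key

noncomputable def L (x : ℝ) : ℝ := x * (x - 1) / 2 * (log x - log (x - 1))

noncomputable def L' (x : ℝ) : ℝ := (2 * x - 1) / 2 * (log x - log (x - 1)) - 1 / 2

theorem hasDerivAt_log_sub_log_sub_one {x : ℝ} (hx : 1 < x) :
    HasDerivAt (fun y => log y - log (y - 1)) (1 / x - 1 / (x - 1)) x :=
  ((hasDerivAt_id' x).log (by linarith)).sub
    (((hasDerivAt_id' x).sub_const 1).log (sub_ne_zero.2 hx.ne'))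

theorem hasDerivAt_L {x : ℝ} (hx : 1 < x) : HasDerivAt L (L' x) x := by
  have h := (((hasDerivAt_id' x).fun_mul ((hasDerivAt_id' x).sub_const 1)).div_const 2).fun_mul
    (hasDerivAt_log_sub_log_sub_one hx)
  refine h.congr_deriv ?_
  have : x - 1 ≠ 0 := by linarith
  have : x ≠ 0 := by linarith
  simp only [L']
  field_simp
  ring

theorem hasDerivAt_L' {x : ℝ} (hx : 1 < x) :
    HasDerivAt L' (log x - log (x - 1) - (x⁻¹ + (x - 1)⁻¹) / 2) x := by
  have h := (((((hasDerivAt_id' x).const_mul 2).sub_const 1).div_const 2).fun_mul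
    (hasDerivAt_log_sub_log_sub_one hx)).sub_const (1 / 2)
  refine h.congr_deriv ?_
  have : x - 1 ≠ 0 := by linarith
  have : x ≠ 0 := by linarith
  field_simp
  ring

theorem strictAntiOn_L' : StrictAntiOn L' (Ioi 1) := by
  refine strictAntiOn_of_hasDerivWithinAt_neg (convex_Ioi 1)
    (fun x hx => (hasDerivAt_L' hx).continuousAt.continuousWithinAt)
    (fun x hx => (hasDerivAt_L' (interior_subset hx)).hasDerivWithinAt) fun x hx => ?_
  have hx : 1 < x := interior_subset hx
  have := log_sub_log_lt_trapezoid (sub_pos.2 hx) (sub_one_lt x)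
  rw [sub_sub_cancel, one_mul, add_comm] at this
  linarith

theorem strictConcaveOn_L : StrictConcaveOn ℝ (Ioi 1) L := by
  refine StrictAntiOn.strictConcaveOn_of_deriv (convex_Ioi 1)
    (fun x hx => (hasDerivAt_L hx).continuousAt.continuousWithinAt) ?_
  rw [interior_Ioi]
  exact strictAntiOn_L'.congr fun x hx => ((hasDerivAt_L hx).deriv).symm

/-- For integers `k, l, m ≥ 1` with `l ≥ 2`, the strict inequality
`L(l) + L(k+l+m) < L(l+m) + L(k+l)` holds, where `L(x) = (x(x-1)/2)(ln x - ln(x-1))`. -/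
theorem L_chord_inequality_integers (k l m : ℕ) (hk : 1 ≤ k) (hl : 2 ≤ l) (hm : 1 ≤ m) :
    (fun x : ℝ => x * (x - 1) / 2 * (Real.log x - Real.log (x - 1))) (l : ℝ)
        + (fun x : ℝ => x * (x - 1) / 2 * (Real.log x - Real.log (x - 1))) ((k : ℝ) + l + m)
      < (fun x : ℝ => x * (x - 1) / 2 * (Real.log x - Real.log (x - 1))) ((l : ℝ) + m)
        + (fun x : ℝ => x * (x - 1) / 2 * (Real.log x - Real.log (x - 1))) ((k : ℝ) + l) := by
  have hk : (1 : ℝ) ≤ k := by exact_mod_cast hk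
  have hl : (2 : ℝ) ≤ l := by exact_mod_cast hl
  have hm : (1 : ℝ) ≤ m := by exact_mod_cast hm
  exact strictConcaveOn_L.add_lt_add_of_add_eq (mem_Ioi.2 (by linarith))
    (mem_Ioi.2 (by linarith)) (by linarith) (by linarith) (by ring)
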